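/- arXiv:2006.02978 — 2 statements merged into one kernel-verified Lean document; each statement's English description precedes it below -/
import Mathlib

section
/- Let X be a topological space. For open subsets U, V of X, define V ≪_F U to mean: every filter 𝔣 of open sets with V ∈ 𝔣 satisfies lim 𝔣 ∩ U ≠ ∅, where lim 𝔣 is the set of points all of whose open neighbourhoods belong to 𝔣. Then V ≪_F U if and only if there exists x ∈ U such that V ⊆ {y ∈ X : x ∈ cl{y}}. -/
/-- `F` is an open filter: a filter on the lattice of open subsets of `X`. -/
def IsOpenFilter {X : Type*} [TopologicalSpace X] (F : Set (Set X)) : Prop :=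
  (∀ U ∈ F, IsOpen U) ∧ Set.univ ∈ F ∧
  (∀ U V : Set X, U ∈ F → V ∈ F → U ∩ V ∈ F) ∧
  (∀ U V : Set X, U ∈ F → IsOpen V → U ⊆ V → V ∈ F)

/-- The set of limit points of an open filter. -/
def limOpens {X : Type*} [TopologicalSpace X] (F : Set (Set X)) : Set X :=
  {x | ∀ U : Set X, IsOpen U → x ∈ U → U ∈ F}

/-- `V ≪_F U` iff there is `x ∈ U` with `V ⊆ ↓x` in the specialization order. -/
theorem way_below_F_iff {X : Type*} [TopologicalSpace X]
    (U V : Set X) (hU : IsOpen U) (hV : IsOpen V) :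
    (∀ F : Set (Set X), IsOpenFilter F → V ∈ F → (limOpens F ∩ U).Nonempty) ↔
    (∃ x ∈ U, V ⊆ {y : X | x ∈ closure {y}}) := by
  constructor
  · intro h
    -- use the filter of open sets containing V
    have hF : IsOpenFilter {W : Set X | IsOpen W ∧ V ⊆ W} := by
      refine ⟨fun W hW => hW.1, ⟨isOpen_univ, Set.subset_univ V⟩, ?_, ?_⟩
      · rintro A B ⟨hA, hVA⟩ ⟨hB, hVB⟩
        exact ⟨hA.inter hB, Set.subset_inter hVA hVB⟩
      · rintro A B ⟨hA, hVA⟩ hB hAB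
        exact ⟨hB, hVA.trans hAB⟩
    obtain ⟨x, hxlim, hxU⟩ := h _ hF ⟨hV, le_refl V⟩
    refine ⟨x, hxU, fun y hy => ?_⟩
    rw [Set.mem_setOf_eq, mem_closure_iff]
    intro W hW hxW
    exact ⟨y, (hxlim W hW hxW).2 hy, rfl⟩
  · rintro ⟨x, hxU, hVx⟩ F hF hVF
    refine ⟨x, ?_, hxU⟩
    intro W hW hxW
    refine hF.2.2.2 V W hVF hW ?_
    intro y hy
    have := hVx hy
    rw [Set.mem_setOf_eq, mem_closure_iff] at this
    obtain ⟨z, hzW, hz⟩ := this W hW hxW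
    rw [Set.mem_singleton_iff] at hz
    exact hz ▸ hzW
end

section
/- Let X be a topological space, FX the space of filters of open subsets of X with topology generated by the sets U^# = {𝔣 : U ∈ 𝔣} for U open, and VX the space of closed subsets of X with the lower Vietoris topology generated by B^◇ = {A closed : A ∩ B ≠ ∅} for B open. Then the map (−)^+ : FX → VX sending a filter 𝔣 to lim 𝔣 = {x : every open neighbourhood of x is in 𝔣} is continuous if and only if X is F-core-compact, i.e. for every x ∈ X and every open neighbourhood U of x there is an open neighbourhood W of x with W ≪_F U (every open filter containing W has a limit point in U). -/
/-- In a generated topology, every point of an open set lies in a finite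
intersection of subbasic sets contained in the open set. -/
lemma generateOpen_exists_finite {α : Type*} {S : Set (Set α)} {O : Set α}
    (h : TopologicalSpace.GenerateOpen S O) :
    ∀ a ∈ O, ∃ f : Set (Set α), f.Finite ∧ f ⊆ S ∧ a ∈ ⋂₀ f ∧ ⋂₀ f ⊆ O := by
  induction h with
  | basic s hs =>
      intro a ha
      exact ⟨{s}, Set.finite_singleton s, by simpa using hs, by simpa using ha, by simp⟩
  | univ =>
      intro a _
      exact ⟨∅, Set.finite_empty, by simp, by simp, by simp⟩
  | inter O1 O2 h1 h2 ih1 ih2 =>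
      intro a ha
      obtain ⟨f1, hf1, hs1, ha1, hsub1⟩ := ih1 a ha.1
      obtain ⟨f2, hf2, hs2, ha2, hsub2⟩ := ih2 a ha.2
      refine ⟨f1 ∪ f2, hf1.union hf2, Set.union_subset hs1 hs2, ?_, ?_⟩
      · rw [Set.sInter_union]; exact ⟨ha1, ha2⟩
      · rw [Set.sInter_union]; exact fun y hy => ⟨hsub1 hy.1, hsub2 hy.2⟩
  | sUnion T hT ih =>
      intro a ha
      obtain ⟨t, htT, hat⟩ := ha
      obtain ⟨f, hf, hsS, haf, hsub⟩ := ih t htT a hat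
      exact ⟨f, hf, hsS, haf, hsub.trans (Set.subset_sUnion_of_mem htT)⟩

/-- The map `(−)^+ : FX → VX`, `𝔣 ↦ lim 𝔣`, is continuous (from the filter space
with subbasis `U^#` to the lower-Vietoris topology with subbasis `B^◇`) iff
`X` is F-core-compact. -/
theorem limMap_continuous_iff_F_core_compact {X : Type*} [TopologicalSpace X] :
    @Continuous {F : Set (Set X) // IsOpenFilter F} (Set X)
      (TopologicalSpace.generateFrom
        {s | ∃ U : Set X, IsOpen U ∧ s = {F : {F : Set (Set X) // IsOpenFilter F} | U ∈ F.1}})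
      (TopologicalSpace.generateFrom
        {t | ∃ B : Set X, IsOpen B ∧ t = {A : Set X | (A ∩ B).Nonempty}})
      (fun F => limOpens F.1)
    ↔ ∀ (x : X) (U : Set X), IsOpen U → x ∈ U →
        ∃ W : Set X, IsOpen W ∧ x ∈ W ∧
          ∀ F : Set (Set X), IsOpenFilter F → W ∈ F → (limOpens F ∩ U).Nonempty := by
  classical
  letI tF : TopologicalSpace {F : Set (Set X) // IsOpenFilter F} :=
    TopologicalSpace.generateFrom
      {s | ∃ U : Set X, IsOpen U ∧ s = {F : {F : Set (Set X) // IsOpenFilter F} | U ∈ F.1}}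
  letI tV : TopologicalSpace (Set X) :=
    TopologicalSpace.generateFrom
      {t | ∃ B : Set X, IsOpen B ∧ t = {A : Set X | (A ∩ B).Nonempty}}
  constructor
  · intro hc x U hU hxU
    -- the open neighbourhood filter of x
    set N : Set (Set X) := {V | IsOpen V ∧ x ∈ V} with hN
    have hNf : IsOpenFilter N := by
      refine ⟨fun V hV => hV.1, ⟨isOpen_univ, trivial⟩, ?_, ?_⟩
      · intro A B hA hB; exact ⟨hA.1.inter hB.1, hA.2, hB.2⟩
      · intro A B hA hBo hAB; exact ⟨hBo, hAB hA.2⟩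
    have hpre : TopologicalSpace.GenerateOpen
        {s | ∃ U : Set X, IsOpen U ∧ s = {F : {F : Set (Set X) // IsOpenFilter F} | U ∈ F.1}}
        ((fun F : {F : Set (Set X) // IsOpenFilter F} => limOpens F.1) ⁻¹'
          {A : Set X | (A ∩ U).Nonempty}) :=
      (continuous_def.mp hc) _ (TopologicalSpace.GenerateOpen.basic _ ⟨U, hU, rfl⟩)
    have hNmem : (⟨N, hNf⟩ : {F : Set (Set X) // IsOpenFilter F}) ∈
        ((fun F : {F : Set (Set X) // IsOpenFilter F} => limOpens F.1) ⁻¹'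
          {A : Set X | (A ∩ U).Nonempty}) := by
      refine ⟨x, ?_, hxU⟩
      intro V hV hxV
      exact ⟨hV, hxV⟩
    obtain ⟨f, hffin, hfS, hNf', hfsub⟩ := generateOpen_exists_finite hpre _ hNmem
    -- pick for each subbasic set its defining open
    have hch : ∀ s : Set {F : Set (Set X) // IsOpenFilter F},
        ∃ W : Set X, IsOpen W ∧ (s ∈ f →
          s = {F : {F : Set (Set X) // IsOpenFilter F} | W ∈ F.1}) := by
      intro s
      by_cases hs : s ∈ f
      · obtain ⟨W, hWo, hWs⟩ := hfS hs
        exact ⟨W, hWo, fun _ => hWs⟩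
      · exact ⟨Set.univ, isOpen_univ, fun h => absurd h hs⟩
    choose g hgo hgc using hch
    refine ⟨⋂₀ (g '' f), (hffin.image g).isOpen_sInter (by rintro t ⟨s, hs, rfl⟩; exact hgo s), ?_, ?_⟩
    · rintro t ⟨s, hs, rfl⟩
      have : (⟨N, hNf⟩ : {F : Set (Set X) // IsOpenFilter F}) ∈ s := hNf' s hs
      rw [hgc s hs] at this
      exact this.2
    · intro F hF hWF
      have hmem : (⟨F, hF⟩ : {F : Set (Set X) // IsOpenFilter F}) ∈ ⋂₀ f := by
        intro s hs
        rw [hgc s hs]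
        exact hF.2.2.2 _ _ hWF (hgo s) (Set.sInter_subset_of_mem ⟨s, hs, rfl⟩)
      exact hfsub hmem
  · intro hcc
    rw [continuous_generateFrom_iff]
    rintro t ⟨B, hB, rfl⟩
    set P := ((fun F : {F : Set (Set X) // IsOpenFilter F} => limOpens F.1) ⁻¹'
      {A : Set X | (A ∩ B).Nonempty}) with hP
    have hPeq : P = ⋃₀ {s | (∃ W : Set X, IsOpen W ∧
        s = {F : {F : Set (Set X) // IsOpenFilter F} | W ∈ F.1}) ∧ s ⊆ P} := by
      apply Set.Subset.antisymm
      · rintro F ⟨x, hxlim, hxB⟩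
        obtain ⟨W, hWo, hxW, hprop⟩ := hcc x B hB hxB
        refine ⟨{G : {F : Set (Set X) // IsOpenFilter F} | W ∈ G.1}, ⟨⟨W, hWo, rfl⟩, ?_⟩, ?_⟩
        · intro G hG
          exact hprop G.1 G.2 hG
        · exact hxlim W hWo hxW
      · rintro F ⟨s, ⟨_, hsP⟩, hFs⟩
        exact hsP hFs
    show TopologicalSpace.GenerateOpen
      {s | ∃ U : Set X, IsOpen U ∧ s = {F : {F : Set (Set X) // IsOpenFilter F} | U ∈ F.1}} P
    rw [hPeq]
    apply TopologicalSpace.GenerateOpen.sUnion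
    rintro s ⟨⟨W, hWo, rfl⟩, _⟩
    exact TopologicalSpace.GenerateOpen.basic _ ⟨W, hWo, rfl⟩
end
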